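/- Consider a CPRNN with linear activation (σ = identity) and parameters h⁰ ∈ ℝ^n, A, C ∈ ℝ^{n×R}, B ∈ ℝ^{d×R}, U ∈ ℝ^{n×d}, V ∈ ℝ^{n×n}, b ∈ ℝ^n, and let h₂ : (x¹,x²) ↦ h² be the map sending the first two inputs to the second hidden state, where h¹ = [[A,B,C]] ×₁ h⁰ ×₂ x¹ + V h⁰ + U x¹ + b and h² = [[A,B,C]] ×₁ h¹ ×₂ x² + V h¹ + U x² + b. Then h₂ decomposes as h₂(x¹,x²) = α(x¹,x²) + β(x¹) + γ(x²) + δ, where β, γ are linear maps, δ ∈ ℝ^n is constant, and the bilinear part is α(x¹,x²) = [[(Uᵀ + B diag(Aᵀh⁰) Cᵀ) A, B, C]] ×₁ x¹ ×₂ x²; consequently the tensor S^α ∈ ℝ^{d×d×n} defined by S^α_{ijk} = [α(e_i,e_j)]_k satisfies rank_CP(S^α) ≤ rank_CP([[A,B,C]]) ≤ R. -/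

import Mathlib

open Matrix MeasureTheory

noncomputable section

/-- The CP tensor `[[A,B,C]]`. -/
def cpT {d1 d2 d3 R : ℕ} (A : Matrix (Fin d1) (Fin R) ℝ) (B : Matrix (Fin d2) (Fin R) ℝ)
    (C : Matrix (Fin d3) (Fin R) ℝ) : Fin d1 → Fin d2 → Fin d3 → ℝ :=
  fun i j k => ∑ r, A i r * B j r * C k r

/-- `(T ×₁ u ×₂ v)` for a third order tensor `T`. -/
def modeProd {d1 d2 d3 : ℕ} (T : Fin d1 → Fin d2 → Fin d3 → ℝ) (u : Fin d1 → ℝ)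
    (v : Fin d2 → ℝ) : Fin d3 → ℝ :=
  fun k => ∑ i, ∑ j, T i j k * u i * v j

/-- The CP rank of a tensor: the minimal `R` admitting a rank-`R` CP decomposition. -/
def cprank {d1 d2 d3 : ℕ} (T : Fin d1 → Fin d2 → Fin d3 → ℝ) : ℕ :=
  sInf {R : ℕ | ∃ (A : Matrix (Fin d1) (Fin R) ℝ) (B : Matrix (Fin d2) (Fin R) ℝ)
    (C : Matrix (Fin d3) (Fin R) ℝ), T = cpT A B C}

/-- The maximal CP rank of tensors in `ℝ^{d1×d2×d3}`. -/
def Rmax (d1 d2 d3 : ℕ) : ℕ :=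
  sSup {r : ℕ | ∃ T : Fin d1 → Fin d2 → Fin d3 → ℝ, cprank T = r}

/-- `R` is a typical rank if the set of tensors of CP rank `R` has positive Lebesgue measure. -/
def IsTypicalRank (d1 d2 d3 R : ℕ) : Prop :=
  0 < volume {T : Fin d1 → Fin d2 → Fin d3 → ℝ | cprank T = R}

/-- The maximal typical CP rank. -/
def RtypMax (d1 d2 d3 : ℕ) : ℕ := sSup {R : ℕ | IsTypicalRank d1 d2 d3 R}

/-- Hidden states of a CPRNN; `x t` is the input at time `t+1`. -/
def cprnnStates {n d R : ℕ} (σ : ℝ → ℝ) (h0 : Fin n → ℝ)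
    (A : Matrix (Fin n) (Fin R) ℝ) (B : Matrix (Fin d) (Fin R) ℝ) (C : Matrix (Fin n) (Fin R) ℝ)
    (U : Matrix (Fin n) (Fin d) ℝ) (V : Matrix (Fin n) (Fin n) ℝ) (b : Fin n → ℝ)
    (x : ℕ → Fin d → ℝ) : ℕ → Fin n → ℝ
  | 0 => h0
  | t + 1 => fun k =>
      σ (modeProd (cpT A B C) (cprnnStates σ h0 A B C U V b x t) (x t) k
        + V.mulVec (cprnnStates σ h0 A B C U V b x t) k + U.mulVec (x t) k + b k)

/-- Hidden states of a CPBIRNN (second-order term only). -/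
def cpbirnnStates {n d R : ℕ} (σ : ℝ → ℝ) (h0 : Fin n → ℝ)
    (A : Matrix (Fin n) (Fin R) ℝ) (B : Matrix (Fin d) (Fin R) ℝ) (C : Matrix (Fin n) (Fin R) ℝ)
    (x : ℕ → Fin d → ℝ) : ℕ → Fin n → ℝ
  | 0 => h0
  | t + 1 => fun k =>
      σ (modeProd (cpT A B C) (cpbirnnStates σ h0 A B C x t) (x t) k)

/-- Hidden states of a 2RNN with arbitrary second-order tensor. -/
def rnn2States {n d : ℕ} (σ : ℝ → ℝ) (h0 : Fin n → ℝ) (T : Fin n → Fin d → Fin n → ℝ)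
    (U : Matrix (Fin n) (Fin d) ℝ) (V : Matrix (Fin n) (Fin n) ℝ) (b : Fin n → ℝ)
    (x : ℕ → Fin d → ℝ) : ℕ → Fin n → ℝ
  | 0 => h0
  | t + 1 => fun k =>
      σ (modeProd T (rnn2States σ h0 T U V b x t) (x t) k
        + V.mulVec (rnn2States σ h0 T U V b x t) k + U.mulVec (x t) k + b k)

/-- Hidden states of a MIRNN. -/
def mirnnStates {n d : ℕ} (σ : ℝ → ℝ) (h0 α β1 β2 b : Fin n → ℝ)
    (U : Matrix (Fin n) (Fin d) ℝ) (V : Matrix (Fin n) (Fin n) ℝ)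
    (x : ℕ → Fin d → ℝ) : ℕ → Fin n → ℝ
  | 0 => h0
  | t + 1 => fun k =>
      σ (α k * V.mulVec (mirnnStates σ h0 α β1 β2 b U V x t) k * U.mulVec (x t) k
        + β1 k * V.mulVec (mirnnStates σ h0 α β1 β2 b U V x t) k
        + β2 k * U.mulVec (x t) k + b k)

/-- The class of functions computed by CPRNNs of rank `R` and hidden size `n`
(mapping the input sequence `x¹,x²,…` to the hidden state sequence `h¹,h²,…`). -/
def HCPRNN (d n R : ℕ) (σ : ℝ → ℝ) : Set ((ℕ → Fin d → ℝ) → ℕ → Fin n → ℝ) :=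
  {h | ∃ (h0 : Fin n → ℝ) (A : Matrix (Fin n) (Fin R) ℝ) (B : Matrix (Fin d) (Fin R) ℝ)
      (C : Matrix (Fin n) (Fin R) ℝ) (U : Matrix (Fin n) (Fin d) ℝ)
      (V : Matrix (Fin n) (Fin n) ℝ) (b : Fin n → ℝ),
      ∀ x t, h x t = cprnnStates σ h0 A B C U V b x (t + 1)}

/-- The class of functions computed by CPBIRNNs of rank `R` and hidden size `n`. -/
def HCPBIRNN (d n R : ℕ) (σ : ℝ → ℝ) : Set ((ℕ → Fin d → ℝ) → ℕ → Fin n → ℝ) :=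
  {h | ∃ (h0 : Fin n → ℝ) (A : Matrix (Fin n) (Fin R) ℝ) (B : Matrix (Fin d) (Fin R) ℝ)
      (C : Matrix (Fin n) (Fin R) ℝ),
      ∀ x t, h x t = cpbirnnStates σ h0 A B C x (t + 1)}

/-- The class of functions computed by 2RNNs of hidden size `n`. -/
def H2RNN (d n : ℕ) (σ : ℝ → ℝ) : Set ((ℕ → Fin d → ℝ) → ℕ → Fin n → ℝ) :=
  {h | ∃ (h0 : Fin n → ℝ) (T : Fin n → Fin d → Fin n → ℝ) (U : Matrix (Fin n) (Fin d) ℝ)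
      (V : Matrix (Fin n) (Fin n) ℝ) (b : Fin n → ℝ),
      ∀ x t, h x t = rnn2States σ h0 T U V b x (t + 1)}

/-- The class of functions computed by MIRNNs of hidden size `n`. -/
def HMIRNN (d n : ℕ) (σ : ℝ → ℝ) : Set ((ℕ → Fin d → ℝ) → ℕ → Fin n → ℝ) :=
  {h | ∃ (h0 α β1 β2 b : Fin n → ℝ) (U : Matrix (Fin n) (Fin d) ℝ)
      (V : Matrix (Fin n) (Fin n) ℝ),
      ∀ x t, h x t = mirnnStates σ h0 α β1 β2 b U V x (t + 1)}

/-- The class `L(n,q) ∘ H_CPBIRNN(R,n)`: CPBIRNNs composed with a linear output map. -/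
def LHCPBIRNN (d n q R : ℕ) (σ : ℝ → ℝ) : Set ((ℕ → Fin d → ℝ) → ℕ → Fin q → ℝ) :=
  {f | ∃ (ℓ : (Fin n → ℝ) →ₗ[ℝ] (Fin q → ℝ)) (h : (ℕ → Fin d → ℝ) → ℕ → Fin n → ℝ),
      h ∈ HCPBIRNN d n R σ ∧ ∀ x t, f x t = ℓ (h x t)}

end

/-!
With `σ = id`, the contraction `[[A,B,C]] ×₁ h ×₂ x` equals `C diag(Aᵀh) Bᵀ x`, so it is linear
in each argument. Hence `h¹ = E x¹ + c` is affine with `E = U + C diag(Aᵀh⁰) Bᵀ`, and expanding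
`h²` in `h¹` leaves a single bilinear term `[[A,B,C]] ×₁ E x¹ ×₂ x² = [[EᵀA, B, C]] ×₁ x¹ ×₂ x²`.
Its coefficient tensor is `[[EᵀA, B, C]]`, and multiplying the first factor of a minimal CP
decomposition of `[[A,B,C]]` by `Eᵀ` gives a decomposition of it of the same length.
-/

lemma modeProd_cpT {d1 d2 d3 R : ℕ} (A : Matrix (Fin d1) (Fin R) ℝ)
    (B : Matrix (Fin d2) (Fin R) ℝ) (C : Matrix (Fin d3) (Fin R) ℝ)
    (u : Fin d1 → ℝ) (v : Fin d2 → ℝ) :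
    modeProd (cpT A B C) u v = (C * diagonal (Aᵀ *ᵥ u) * Bᵀ) *ᵥ v := by
  funext k
  simp only [modeProd, cpT, mulVec, dotProduct, mul_apply, diagonal_apply, transpose_apply,
    mul_ite, mul_zero, Finset.sum_ite_eq', Finset.mem_univ, if_true, Finset.sum_mul,
    Finset.mul_sum]
  rw [Finset.sum_comm]
  refine Finset.sum_congr rfl fun j _ => ?_
  rw [Finset.sum_comm]
  exact Finset.sum_congr rfl fun r _ => Finset.sum_congr rfl fun i _ => by ring

lemma modeProd_cpT_add_mulVec_left {d1 d2 d3 m R : ℕ} (A : Matrix (Fin d1) (Fin R) ℝ)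
    (B : Matrix (Fin d2) (Fin R) ℝ) (C : Matrix (Fin d3) (Fin R) ℝ)
    (E : Matrix (Fin d1) (Fin m) ℝ) (c : Fin d1 → ℝ) (x : Fin m → ℝ) (v : Fin d2 → ℝ) :
    modeProd (cpT A B C) (E *ᵥ x + c) v =
      modeProd (cpT (Eᵀ * A) B C) x v + (C * diagonal (Aᵀ *ᵥ c) * Bᵀ) *ᵥ v := by
  rw [modeProd_cpT, modeProd_cpT, transpose_mul, transpose_transpose, mulVec_add,
    mulVec_mulVec, ← add_mulVec, ← Matrix.add_mul, ← Matrix.mul_add, diagonal_add]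
  rfl

lemma modeProd_single_single {d1 d2 d3 : ℕ} (T : Fin d1 → Fin d2 → Fin d3 → ℝ)
    (i : Fin d1) (j : Fin d2) (k : Fin d3) :
    modeProd T (Pi.single i 1) (Pi.single j 1) k = T i j k := by
  simp [modeProd, Pi.single_apply, mul_ite]

lemma cpT_mul_left_apply {d1 d2 d3 m R : ℕ} (W : Matrix (Fin m) (Fin d1) ℝ)
    (A : Matrix (Fin d1) (Fin R) ℝ) (B : Matrix (Fin d2) (Fin R) ℝ)
    (C : Matrix (Fin d3) (Fin R) ℝ) (i : Fin m) (j : Fin d2) (k : Fin d3) :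
    cpT (W * A) B C i j k = ∑ l, W i l * cpT A B C l j k := by
  simp only [cpT, mul_apply, Finset.sum_mul, Finset.mul_sum]
  rw [Finset.sum_comm]
  exact Finset.sum_congr rfl fun r _ => Finset.sum_congr rfl fun l _ => by ring

lemma cprank_cpT_le {d1 d2 d3 R : ℕ} (A : Matrix (Fin d1) (Fin R) ℝ)
    (B : Matrix (Fin d2) (Fin R) ℝ) (C : Matrix (Fin d3) (Fin R) ℝ) :
    cprank (cpT A B C) ≤ R :=
  Nat.sInf_le ⟨A, B, C, rfl⟩

lemma exists_cpT_eq_of_cprank {d1 d2 d3 R : ℕ} (A : Matrix (Fin d1) (Fin R) ℝ)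
    (B : Matrix (Fin d2) (Fin R) ℝ) (C : Matrix (Fin d3) (Fin R) ℝ) :
    ∃ (A' : Matrix (Fin d1) (Fin (cprank (cpT A B C))) ℝ)
      (B' : Matrix (Fin d2) (Fin (cprank (cpT A B C))) ℝ)
      (C' : Matrix (Fin d3) (Fin (cprank (cpT A B C))) ℝ), cpT A B C = cpT A' B' C' :=
  Nat.sInf_mem (s := {R' | ∃ (A' : Matrix (Fin d1) (Fin R') ℝ) (B' : Matrix (Fin d2) (Fin R') ℝ)
    (C' : Matrix (Fin d3) (Fin R') ℝ), cpT A B C = cpT A' B' C'}) ⟨R, A, B, C, rfl⟩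

lemma cprank_cpT_mul_left_le {d1 d2 d3 m R : ℕ} (W : Matrix (Fin m) (Fin d1) ℝ)
    (A : Matrix (Fin d1) (Fin R) ℝ) (B : Matrix (Fin d2) (Fin R) ℝ)
    (C : Matrix (Fin d3) (Fin R) ℝ) :
    cprank (cpT (W * A) B C) ≤ cprank (cpT A B C) := by
  obtain ⟨A', B', C', hmin⟩ := exists_cpT_eq_of_cprank A B C
  have hdec : cpT (W * A) B C = cpT (W * A') B' C' := by
    funext i j k
    simp only [cpT_mul_left_apply, hmin]
  rw [hdec]
  exact cprank_cpT_le _ _ _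

/-- for a linear-activation CPRNN, the second-hidden-state map decomposes as
`h₂(x¹,x²) = α(x¹,x²) + β(x¹) + γ(x²) + δ` with bilinear part
`α(x¹,x²) = [[(Uᵀ + B diag(Aᵀh⁰) Cᵀ) A, B, C]] ×₁ x¹ ×₂ x²`, and the associated tensor
`S^α` satisfies `rank_CP(S^α) ≤ rank_CP([[A,B,C]]) ≤ R`. -/
theorem linear_cprnn_second_state_decomposition {n d R : ℕ} (h0 : Fin n → ℝ)
    (A : Matrix (Fin n) (Fin R) ℝ) (B : Matrix (Fin d) (Fin R) ℝ)
    (C : Matrix (Fin n) (Fin R) ℝ) (U : Matrix (Fin n) (Fin d) ℝ)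
    (V : Matrix (Fin n) (Fin n) ℝ) (b : Fin n → ℝ)
    (h1 : (Fin d → ℝ) → Fin n → ℝ)
    (hh1 : ∀ x1, h1 x1 = modeProd (cpT A B C) h0 x1 + V.mulVec h0 + U.mulVec x1 + b)
    (h2 : (Fin d → ℝ) → (Fin d → ℝ) → Fin n → ℝ)
    (hh2 : ∀ x1 x2, h2 x1 x2 =
      modeProd (cpT A B C) (h1 x1) x2 + V.mulVec (h1 x1) + U.mulVec x2 + b)
    (α : (Fin d → ℝ) → (Fin d → ℝ) → Fin n → ℝ)
    (hα : ∀ x1 x2, α x1 x2 =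
      modeProd (cpT ((Uᵀ + B * Matrix.diagonal (Aᵀ.mulVec h0) * Cᵀ) * A) B C) x1 x2)
    (Sα : Fin d → Fin d → Fin n → ℝ)
    (hSα : ∀ i j k, Sα i j k = α (Pi.single i 1) (Pi.single j 1) k) :
    (∃ (β γ : (Fin d → ℝ) →ₗ[ℝ] (Fin n → ℝ)) (δ : Fin n → ℝ),
      ∀ x1 x2, h2 x1 x2 = α x1 x2 + β x1 + γ x2 + δ) ∧
    cprank Sα ≤ cprank (cpT A B C) ∧ cprank (cpT A B C) ≤ R := by
  set E := U + C * diagonal (Aᵀ *ᵥ h0) * Bᵀ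
  set c := V *ᵥ h0 + b
  have hEt : Eᵀ = Uᵀ + B * diagonal (Aᵀ *ᵥ h0) * Cᵀ := by
    simp [E, transpose_add, transpose_mul, Matrix.mul_assoc]
  have h1_affine : ∀ x1, h1 x1 = E *ᵥ x1 + c := fun x1 => by
    rw [hh1, modeProd_cpT, add_mulVec]
    simp only [c]
    abel
  have hSα' : Sα = cpT (Eᵀ * A) B C := by
    funext i j k
    rw [hSα, hα, modeProd_single_single, hEt]
  refine ⟨⟨(V * E).mulVecLin, (C * diagonal (Aᵀ *ᵥ c) * Bᵀ + U).mulVecLin, V *ᵥ c + b,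
    fun x1 x2 => ?_⟩, hSα' ▸ cprank_cpT_mul_left_le _ _ _ _, cprank_cpT_le A B C⟩
  rw [hh2, h1_affine, hα, ← hEt, modeProd_cpT_add_mulVec_left]
  simp only [mulVecLin_apply, add_mulVec, mulVec_add, ← mulVec_mulVec]
  abel
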